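/- With the sequence (b_j) defined via α_j and c_j as in the previous construction (α_0=α_1=α_2=1, α_j=(e/j)^j for j≥3; c_j strictly positive decreasing with c_{j+1} ≤ α_j α_{2j²} c_j; s_n = n(n+1)/2; b_0=c_0, b_1=c_1, b_{s_n+k}=c_{n+1}/α_{n+1−k}), for every K < ∞ one has sup_{m,n≥0} (b_{m+n}/b_n)·K^m < ∞. -/
import Mathlib


open Filter Topology

/-- `α_0 = α_1 = α_2 = 1` and `α_j = (e/j)^j` for `j ≥ 3`. -/
noncomputable def alphaSeq : ℕ → ℝ := fun j => if j ≤ 2 then 1 else (Real.exp 1 / j) ^ j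

/-- `s_n = 1 + 2 + ⋯ + n = n(n+1)/2`. -/
def sTri (n : ℕ) : ℕ := n * (n + 1) / 2

/-- The sequence `(b j)` of the counterexample: `b 0 = c 0`, `b 1 = c 1`, and
`b (s n + k) = c (n+1) / α (n+1-k)` for `n ≥ 1`, `1 ≤ k ≤ n+1` (this determines `b`,
since every integer `≥ 2` is uniquely of this form). -/
def CounterB (c b : ℕ → ℝ) : Prop :=
  b 0 = c 0 ∧ b 1 = c 1 ∧
    ∀ n k : ℕ, 1 ≤ n → 1 ≤ k → k ≤ n + 1 →
      b (sTri n + k) = c (n + 1) / alphaSeq (n + 1 - k)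

lemma sTri_two_mul (n : ℕ) : 2 * sTri n = n * (n + 1) :=
  Nat.mul_div_cancel' (Nat.even_mul_succ_self n).two_dvd

lemma sTri_succ (n : ℕ) : sTri (n + 1) = sTri n + (n + 1) := by
  have h1 := sTri_two_mul n
  have h2 := sTri_two_mul (n + 1)
  have h3 : (n + 1) * (n + 1 + 1) = n * (n + 1) + 2 * (n + 1) := by ring
  omega

lemma sTri_mono : Monotone sTri :=
  monotone_nat_of_le_succ fun n => by rw [sTri_succ]; omega

lemma exists_block : ∀ n : ℕ, 2 ≤ n →
    ∃ i k : ℕ, 1 ≤ i ∧ 1 ≤ k ∧ k ≤ i + 1 ∧ n = sTri i + k := by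
  intro n hn
  induction n with
  | zero => omega
  | succ n ih =>
    rcases Nat.lt_or_ge n 2 with h | h
    · have : n = 1 := by omega
      subst this
      exact ⟨1, 1, le_refl _, le_refl _, by omega, by decide⟩
    · obtain ⟨i, k, hi, hk1, hk2, heq⟩ := ih h
      by_cases hki : k ≤ i
      · exact ⟨i, k + 1, hi, by omega, by omega, by omega⟩
      · refine ⟨i + 1, 1, by omega, le_refl _, by omega, ?_⟩
        have := sTri_succ i
        omega

lemma sTri_succ_le (j : ℕ) (hj : 2 ≤ j) : sTri (j + 1) ≤ 2 * j ^ 2 := by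
  have h2 := sTri_two_mul (j + 1)
  nlinarith [sq_nonneg j]

lemma exp_one_lt_three : Real.exp 1 < 3 := by
  have := Real.exp_one_lt_d9; linarith

lemma alpha_pos (j : ℕ) : 0 < alphaSeq j := by
  unfold alphaSeq
  split
  · norm_num
  · next h =>
    have hj : (0:ℝ) < j := by exact_mod_cast (by omega : 0 < j)
    positivity

lemma alpha_le_one (j : ℕ) : alphaSeq j ≤ 1 := by
  unfold alphaSeq
  split
  · exact le_refl 1
  · next h =>
    have hj : (3:ℝ) ≤ j := by exact_mod_cast (by omega : 3 ≤ j)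
    have he : Real.exp 1 / j ≤ 1 := by
      rw [div_le_one (by linarith)]
      linarith [exp_one_lt_three]
    exact pow_le_one₀ (by positivity) he

lemma alpha_anti : Antitone alphaSeq := by
  intro a b hab
  unfold alphaSeq
  by_cases hb2 : b ≤ 2
  · rw [if_pos hb2, if_pos (by omega)]
  · rw [if_neg hb2]
    by_cases ha2 : a ≤ 2
    · rw [if_pos ha2]
      have hj : (3:ℝ) ≤ b := by exact_mod_cast (by omega : 3 ≤ b)
      have he : Real.exp 1 / b ≤ 1 := by
        rw [div_le_one (by linarith)]; linarith [exp_one_lt_three]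
      exact pow_le_one₀ (by positivity) he
    · rw [if_neg ha2]
      have ha3 : (3:ℝ) ≤ a := by exact_mod_cast (by omega : 3 ≤ a)
      have hab' : (a:ℝ) ≤ b := by exact_mod_cast hab
      have h1 : (Real.exp 1 / b) ^ b ≤ (Real.exp 1 / a) ^ b := by
        gcongr
      have h2 : (Real.exp 1 / a) ^ b ≤ (Real.exp 1 / a) ^ a := by
        apply pow_le_pow_of_le_one (by positivity) _ hab
        rw [div_le_one (by linarith)]; linarith [exp_one_lt_three]
      linarith

lemma alpha_submul (a b : ℕ) : alphaSeq (a + b) ≤ alphaSeq a * alphaSeq b := by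
  by_cases ha : a ≤ 2
  · have h1 : alphaSeq a = 1 := by unfold alphaSeq; rw [if_pos ha]
    rw [h1, one_mul]
    exact alpha_anti (Nat.le_add_left b a)
  · by_cases hb : b ≤ 2
    · have h1 : alphaSeq b = 1 := by unfold alphaSeq; rw [if_pos hb]
      rw [h1, mul_one]
      exact alpha_anti (Nat.le_add_right a b)
    · have ha3 : 3 ≤ a := by omega
      have hb3 : 3 ≤ b := by omega
      have hA : (0:ℝ) < a := by exact_mod_cast (by omega : 0 < a)
      have hB : (0:ℝ) < b := by exact_mod_cast (by omega : 0 < b)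
      have hE : (0:ℝ) < Real.exp 1 := Real.exp_pos 1
      unfold alphaSeq
      rw [if_neg (by omega), if_neg ha, if_neg hb]
      push_cast
      rw [div_pow, div_pow, div_pow]
      have hkey : (a:ℝ) ^ a * (b:ℝ) ^ b ≤ ((a:ℝ) + b) ^ (a + b) := by
        rw [pow_add]
        gcongr
        · linarith
        · linarith
      calc Real.exp 1 ^ (a + b) / ((a:ℝ) + b) ^ (a + b)
          ≤ Real.exp 1 ^ (a + b) / ((a:ℝ) ^ a * (b:ℝ) ^ b) := by
            gcongr
          _ = Real.exp 1 ^ a / (a:ℝ) ^ a * (Real.exp 1 ^ b / (b:ℝ) ^ b) := by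
            rw [pow_add]
            field_simp

lemma b_pos (c b : ℕ → ℝ) (hcpos : ∀ j, 0 < c j) (hb : CounterB c b) :
    ∀ n, 0 < b n := by
  obtain ⟨hb0, hb1, hbf⟩ := hb
  intro n
  rcases Nat.lt_or_ge n 2 with h | h
  · interval_cases n
    · rw [hb0]; exact hcpos 0
    · rw [hb1]; exact hcpos 1
  · obtain ⟨i, k, hi, hk1, hk2, heq⟩ := exists_block n h
    rw [heq, hbf i k hi hk1 hk2]
    exact div_pos (hcpos _) (alpha_pos _)

lemma block_mono {i k j k' : ℕ} (hk1 : 1 ≤ k) (hk1' : 1 ≤ k') (hk2' : k' ≤ j + 1)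
    (h : sTri i + k ≤ sTri j + k') : i ≤ j := by
  by_contra hlt
  push_neg at hlt
  have h1 : sTri (j + 1) ≤ sTri i := sTri_mono hlt
  have h2 := sTri_succ j
  omega

lemma b_key (c b : ℕ → ℝ) (hcpos : ∀ j, 0 < c j) (hcdec : Antitone c)
    (hcrec : ∀ j : ℕ, c (j + 1) ≤ alphaSeq j * alphaSeq (2 * j ^ 2) * c j)
    (hb : CounterB c b) :
    ∀ m n : ℕ, 2 ≤ n → b (m + n) ≤ alphaSeq m * b n := by
  obtain ⟨hb0, hb1, hbf⟩ := hb
  intro m n hn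
  obtain ⟨i, k, hi, hk1, hk2, heqn⟩ := exists_block n hn
  obtain ⟨j, k', hj, hk1', hk2', heqm⟩ := exists_block (m + n) (by omega)
  have hij : i ≤ j := block_mono hk1 hk1' hk2' (by omega)
  have hbn : b n = c (i + 1) / alphaSeq (i + 1 - k) := by
    rw [heqn]; exact hbf i k hi hk1 hk2
  have hbmn : b (m + n) = c (j + 1) / alphaSeq (j + 1 - k') := by
    rw [heqm]; exact hbf j k' hj hk1' hk2'
  rcases eq_or_lt_of_le hij with heq | hlt
  · -- same block
    subst heq
    have hkk : k' = k + m := by omega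
    set a := i + 1 - k' with ha
    have hak : i + 1 - k = a + m := by omega
    rw [hbn, hbmn, hak]
    have hsub : alphaSeq (a + m) ≤ alphaSeq m * alphaSeq a := by
      rw [add_comm]; exact alpha_submul m a
    rw [div_le_iff₀ (alpha_pos a), mul_comm (alphaSeq m) (c (i + 1) / alphaSeq (a + m)),
      div_mul_eq_mul_div, div_mul_eq_mul_div, le_div_iff₀ (alpha_pos (a + m))]
    calc c (i + 1) * alphaSeq (a + m) ≤ c (i + 1) * (alphaSeq m * alphaSeq a) := by
          exact mul_le_mul_of_nonneg_left hsub (hcpos _).le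
      _ = c (i + 1) * alphaSeq m * alphaSeq a := by ring
  · -- later block
    have hj2 : 2 ≤ j := by omega
    have hm2j : m ≤ 2 * j ^ 2 := by
      have h1 : m + n ≤ sTri (j + 1) := by
        have := sTri_succ j; omega
      have h2 := sTri_succ_le j hj2
      omega
    have hstep1 : b (m + n) ≤ c (j + 1) / alphaSeq j := by
      rw [hbmn]
      gcongr
      · exact (hcpos _).le
      · exact alpha_pos j
      · exact alpha_anti (by omega : j + 1 - k' ≤ j)
    have hstep2 : c (j + 1) / alphaSeq j ≤ alphaSeq (2 * j ^ 2) * c j := by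
      rw [div_le_iff₀ (alpha_pos j)]
      calc c (j + 1) ≤ alphaSeq j * alphaSeq (2 * j ^ 2) * c j := hcrec j
        _ = alphaSeq (2 * j ^ 2) * c j * alphaSeq j := by ring
    have hstep3 : alphaSeq (2 * j ^ 2) * c j ≤ alphaSeq m * c (i + 1) := by
      apply mul_le_mul
      · exact alpha_anti hm2j
      · exact hcdec (by omega : i + 1 ≤ j)
      · exact (hcpos _).le
      · exact (alpha_pos m).le
    have hstep4 : alphaSeq m * c (i + 1) ≤ alphaSeq m * b n := by
      apply mul_le_mul_of_nonneg_left _ (alpha_pos m).le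
      rw [hbn, le_div_iff₀ (alpha_pos _)]
      calc c (i + 1) * alphaSeq (i + 1 - k) ≤ c (i + 1) * 1 := by
            exact mul_le_mul_of_nonneg_left (alpha_le_one _) (hcpos _).le
        _ = c (i + 1) := mul_one _
    linarith

lemma alpha_K_bound (K : ℝ) (hK : 1 ≤ K) :
    ∃ N : ℕ, 3 ≤ N ∧ ∀ j : ℕ, alphaSeq j * K ^ j ≤ K ^ N := by
  refine ⟨max (Nat.ceil (Real.exp 1 * K)) 3, le_max_right _ _, ?_⟩
  set N := max (Nat.ceil (Real.exp 1 * K)) 3 with hN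
  intro j
  by_cases hjN : j ≤ N
  · calc alphaSeq j * K ^ j ≤ 1 * K ^ j := by
          exact mul_le_mul_of_nonneg_right (alpha_le_one j) (by positivity)
      _ = K ^ j := one_mul _
      _ ≤ K ^ N := pow_le_pow_right₀ hK hjN
  · push_neg at hjN
    have hj3 : ¬ j ≤ 2 := by omega
    have hjpos : (0:ℝ) < j := by exact_mod_cast (by omega : 0 < j)
    have heK : Real.exp 1 * K ≤ j := by
      calc Real.exp 1 * K ≤ (Nat.ceil (Real.exp 1 * K) : ℝ) := Nat.le_ceil _
        _ ≤ (N : ℝ) := by exact_mod_cast le_max_left _ _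
        _ ≤ (j : ℝ) := by exact_mod_cast hjN.le
    have h1 : alphaSeq j * K ^ j = (Real.exp 1 * K / j) ^ j := by
      unfold alphaSeq
      rw [if_neg hj3, ← mul_pow]
      congr 1
      field_simp
    rw [h1]
    calc (Real.exp 1 * K / j) ^ j ≤ 1 ^ j := by
          apply pow_le_pow_left₀ (by positivity)
          rw [div_le_one hjpos]; exact heK
      _ = 1 := one_pow j
      _ ≤ K ^ N := one_le_pow₀ hK

lemma bK_bound (c b : ℕ → ℝ) (hcpos : ∀ j, 0 < c j) (hcdec : Antitone c)
    (hcrec : ∀ j : ℕ, c (j + 1) ≤ alphaSeq j * alphaSeq (2 * j ^ 2) * c j)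
    (hb : CounterB c b) :
    ∀ K : ℝ, 1 ≤ K → ∃ C : ℝ, ∀ m : ℕ, b m * K ^ m ≤ C := by
  intro K hK
  obtain ⟨N, hN3, hN⟩ := alpha_K_bound K hK
  obtain ⟨hb0, hb1, hbf⟩ := hb
  refine ⟨max (max (b 0) (b 1 * K)) (c 0 * K ^ N), ?_⟩
  intro m
  rcases Nat.lt_or_ge m 2 with h | h
  · interval_cases m
    · simpa using le_trans (le_max_left _ _) (le_max_left _ _)
    · simpa using le_trans (le_max_right (b 0) (b 1 * K)) (le_max_left _ _)
  · obtain ⟨i, k, hi, hk1, hk2, heq⟩ := exists_block m h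
    have hbm : b m ≤ c 0 * alphaSeq (2 * i ^ 2) := by
      rw [heq, hbf i k hi hk1 hk2]
      calc c (i + 1) / alphaSeq (i + 1 - k) ≤ c (i + 1) / alphaSeq i := by
            gcongr
            · exact (hcpos _).le
            · exact alpha_pos i
            · exact alpha_anti (by omega : i + 1 - k ≤ i)
        _ ≤ alphaSeq (2 * i ^ 2) * c i := by
            rw [div_le_iff₀ (alpha_pos i)]
            calc c (i + 1) ≤ alphaSeq i * alphaSeq (2 * i ^ 2) * c i := hcrec i
              _ = alphaSeq (2 * i ^ 2) * c i * alphaSeq i := by ring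
        _ ≤ alphaSeq (2 * i ^ 2) * c 0 := by
            exact mul_le_mul_of_nonneg_left (hcdec (Nat.zero_le i)) (alpha_pos _).le
        _ = c 0 * alphaSeq (2 * i ^ 2) := mul_comm _ _
    have hKm : alphaSeq (2 * i ^ 2) * K ^ m ≤ K ^ N := by
      rcases Nat.lt_or_ge i 2 with hi1 | hi2
      · have hi1' : i = 1 := by omega
        subst hi1'
        have ha2 : alphaSeq (2 * 1 ^ 2) = 1 := by norm_num [alphaSeq]
        rw [ha2, one_mul]
        have hm3 : m ≤ 3 := by
          have : sTri 1 = 1 := by decide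
          omega
        exact pow_le_pow_right₀ hK (by omega)
      · have hm2i : m ≤ 2 * i ^ 2 := by
          have h1 : m ≤ sTri (i + 1) := by have := sTri_succ i; omega
          have h2 := sTri_succ_le i hi2
          omega
        calc alphaSeq (2 * i ^ 2) * K ^ m ≤ alphaSeq (2 * i ^ 2) * K ^ (2 * i ^ 2) := by
              exact mul_le_mul_of_nonneg_left (pow_le_pow_right₀ hK hm2i) (alpha_pos _).le
          _ ≤ K ^ N := hN _
    calc b m * K ^ m ≤ c 0 * alphaSeq (2 * i ^ 2) * K ^ m := by
          exact mul_le_mul_of_nonneg_right hbm (by positivity)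
      _ = c 0 * (alphaSeq (2 * i ^ 2) * K ^ m) := by ring
      _ ≤ c 0 * K ^ N := mul_le_mul_of_nonneg_left hKm (hcpos 0).le
      _ ≤ max (max (b 0) (b 1 * K)) (c 0 * K ^ N) := le_max_right _ _


/-- For the sequence `(b j)` of the counterexample construction,
`sup_{m,n} (b (m+n)/b n) · K^m < ∞` for every `K < ∞`. -/
theorem counterB_sup_ratio (c b : ℕ → ℝ) (hcpos : ∀ j, 0 < c j) (hcdec : Antitone c)
    (hcrec : ∀ j : ℕ, c (j + 1) ≤ alphaSeq j * alphaSeq (2 * j ^ 2) * c j)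
    (hb : CounterB c b) :
    ∀ K : ℝ, 0 < K → ∃ C : ℝ, ∀ m n : ℕ, b (m + n) / b n * K ^ m ≤ C := by
  intro K hK
  set K' := max K 1 with hK'
  have hK1 : 1 ≤ K' := le_max_right _ _
  have hKK : K ≤ K' := le_max_left _ _
  have hbpos := b_pos c b hcpos hb
  obtain ⟨C2, hC2⟩ := bK_bound c b hcpos hcdec hcrec hb K' hK1
  obtain ⟨N, hN3, hN⟩ := alpha_K_bound K' hK1
  refine ⟨max (K' ^ N) (max (C2 / b 0) (C2 / (b 1 * K'))), ?_⟩
  intro m n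
  have step0 : b (m + n) / b n * K ^ m ≤ b (m + n) / b n * K' ^ m := by
    have h1 : (0:ℝ) ≤ b (m + n) / b n := (div_pos (hbpos _) (hbpos _)).le
    exact mul_le_mul_of_nonneg_left (pow_le_pow_left₀ hK.le hKK m) h1
  refine step0.trans ?_
  match n with
  | 0 =>
    have : b (m + 0) / b 0 * K' ^ m = b m * K' ^ m / b 0 := by
      rw [Nat.add_zero]; ring
    rw [this]
    calc b m * K' ^ m / b 0 ≤ C2 / b 0 := by
          gcongr
          · exact (hbpos 0).le
          · exact hC2 m
      _ ≤ _ := le_trans (le_max_left _ _) (le_max_right _ _)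
  | 1 =>
    have hbne : b 1 ≠ 0 := (hbpos 1).ne'
    have hKne : K' ≠ 0 := by positivity
    have heq : b (m + 1) / b 1 * K' ^ m = b (m + 1) * K' ^ (m + 1) / (b 1 * K') := by
      rw [pow_succ]; field_simp
    rw [heq]
    calc b (m + 1) * K' ^ (m + 1) / (b 1 * K') ≤ C2 / (b 1 * K') := by
          gcongr
          · exact (mul_pos (hbpos 1) (lt_of_lt_of_le one_pos hK1)).le
          · exact hC2 (m + 1)
      _ ≤ _ := le_trans (le_max_right _ _) (le_max_right _ _)
  | (n + 2) =>
    have hkey := b_key c b hcpos hcdec hcrec hb m (n + 2) (by omega)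
    calc b (m + (n + 2)) / b (n + 2) * K' ^ m
        ≤ alphaSeq m * K' ^ m := by
          apply mul_le_mul_of_nonneg_right _ (by positivity)
          rw [div_le_iff₀ (hbpos _)]
          linarith
      _ ≤ K' ^ N := hN m
      _ ≤ _ := le_max_left _ _
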